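/- For the transposition map T on a d-dimensional system (with Choi matrix the swap operator), the robustness R(T) with respect to CPTNI maps equals (d−1)/2, and the base norm ‖T‖_CPTNI equals d. -/

import Mathlib

open Matrix Kronecker ComplexOrder

/-- Singular values of a square complex matrix. -/
noncomputable def singVals {n : Type*} [Fintype n] [DecidableEq n]
    (X : Matrix n n ℂ) : n → ℝ :=
  fun i => Real.sqrt ((Matrix.isHermitian_mul_conjTranspose_self X).eigenvalues i)

/-- Trace norm (Schatten 1-norm): sum of singular values; for Hermitian `X` this
is the sum of the absolute values of the eigenvalues. -/
noncomputable def traceNorm {n : Type*} [Fintype n] [DecidableEq n]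
    (X : Matrix n n ℂ) : ℝ :=
  ∑ i, singVals X i

/-- Operator norm (Schatten ∞-norm): largest singular value. -/
noncomputable def opNorm {n : Type*} [Fintype n] [DecidableEq n]
    (X : Matrix n n ℂ) : ℝ :=
  ⨆ i, singVals X i

/-- A density operator: positive semidefinite with unit trace. -/
def Density {n : Type*} [Fintype n] (ρ : Matrix n n ℂ) : Prop :=
  ρ.PosSemidef ∧ ρ.trace = 1

/-- Loewner order: `X ⊑ Y` iff `Y - X` is positive semidefinite. -/
def Loewner {n : Type*} [Fintype n] (X Y : Matrix n n ℂ) : Prop :=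
  (Y - X).PosSemidef

/-- Partial trace over the second (B) factor. -/
noncomputable def ptraceB {a b : Type*} [Fintype b] (M : Matrix (a × b) (a × b) ℂ) :
    Matrix a a ℂ :=
  Matrix.of fun i j => ∑ k, M (i, k) (j, k)

/-- Choi matrix of a linear map on matrices. -/
noncomputable def choi {da db : ℕ}
    (Φ : Matrix (Fin da) (Fin da) ℂ →ₗ[ℂ] Matrix (Fin db) (Fin db) ℂ) :
    Matrix (Fin da × Fin db) (Fin da × Fin db) ℂ :=
  Matrix.of fun p q => Φ (Matrix.single p.1 q.1 1) p.2 q.2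

/-- Completely positive and trace non-increasing, via the Choi matrix. -/
def IsCPTNI {da db : ℕ}
    (Φ : Matrix (Fin da) (Fin da) ℂ →ₗ[ℂ] Matrix (Fin db) (Fin db) ℂ) : Prop :=
  (choi Φ).PosSemidef ∧ Loewner (ptraceB (choi Φ)) 1

/-- Completely positive and trace preserving, via the Choi matrix. -/
def IsCPTP {da db : ℕ}
    (Φ : Matrix (Fin da) (Fin da) ℂ →ₗ[ℂ] Matrix (Fin db) (Fin db) ℂ) : Prop :=
  (choi Φ).PosSemidef ∧ ptraceB (choi Φ) = 1

/-- The map `id_A ⊗ Φ` acting on operators on `A ⊗ A`. -/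
noncomputable def idTensor {da db : ℕ}
    (Φ : Matrix (Fin da) (Fin da) ℂ →ₗ[ℂ] Matrix (Fin db) (Fin db) ℂ)
    (M : Matrix (Fin da × Fin da) (Fin da × Fin da) ℂ) :
    Matrix (Fin da × Fin db) (Fin da × Fin db) ℂ :=
  Matrix.of fun p q => Φ (Matrix.of fun k l => M (p.1, k) (q.1, l)) p.2 q.2

/-- Diamond norm: `max_ρ ‖(id ⊗ Φ)(ρ)‖₁` over bipartite density operators. -/
noncomputable def diamondNorm {da db : ℕ}
    (Φ : Matrix (Fin da) (Fin da) ℂ →ₗ[ℂ] Matrix (Fin db) (Fin db) ℂ) : ℝ :=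
  sSup {x : ℝ | ∃ ρ : Matrix (Fin da × Fin da) (Fin da × Fin da) ℂ,
    Density ρ ∧ x = traceNorm (idTensor Φ ρ)}

/-- Base norm with respect to CPTNI maps. -/
noncomputable def cptniNorm {da db : ℕ}
    (Φ : Matrix (Fin da) (Fin da) ℂ →ₗ[ℂ] Matrix (Fin db) (Fin db) ℂ) : ℝ :=
  sInf {s : ℝ | ∃ lp lm : ℝ, ∃ Λp Λm :
      Matrix (Fin da) (Fin da) ℂ →ₗ[ℂ] Matrix (Fin db) (Fin db) ℂ,
    0 ≤ lp ∧ 0 ≤ lm ∧ IsCPTNI Λp ∧ IsCPTNI Λm ∧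
    Φ = (lp : ℂ) • Λp - (lm : ℂ) • Λm ∧ s = lp + lm}

/-- The transposition map on a `d`-dimensional system. -/
noncomputable def transposeMap (d : ℕ) :
    Matrix (Fin d) (Fin d) ℂ →ₗ[ℂ] Matrix (Fin d) (Fin d) ℂ where
  toFun := Matrix.transpose
  map_add' := fun _ _ => Matrix.transpose_add _ _
  map_smul' := fun _ _ => Matrix.transpose_smul _ _

/-- Robustness with respect to CPTNI maps:
`R(Φ) = min { λ ≥ 0 : (Φ + λΛ)/(1+λ) CPTNI for some CPTNI Λ }`. -/
noncomputable def robustnessCPTNI {da db : ℕ} (Φ : Matrix (Fin da) (Fin da) ℂ →ₗ[ℂ] Matrix (Fin db) (Fin db) ℂ) : ℝ :=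
  sInf {l : ℝ | 0 ≤ l ∧ ∃ Λ : Matrix (Fin da) (Fin da) ℂ →ₗ[ℂ] Matrix (Fin db) (Fin db) ℂ, IsCPTNI Λ ∧
    IsCPTNI (((1 / (1 + l) : ℝ) : ℂ) • (Φ + ((l : ℝ) : ℂ) • Λ))}

/-!
The Choi matrix of `T` is the swap `S = P₊ - P₋`, where `P± = (1 ± S)/2` are the projections onto
the symmetric and antisymmetric subspaces; their partial traces are `(d ± 1)/2 • 1`. Normalising
`P±` gives CPTNI maps `W±` with `T = ((d+1)/2) W₊ - ((d-1)/2) W₋`, equivalently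
`(T + ((d-1)/2) W₋) / (1 + (d-1)/2) = W₊`; these witness the upper bounds.

For the lower bounds pair Choi matrices with `P±`: for CPTNI `Λ`, `0 ≤ tr (P± C_Λ) ≤ tr C_Λ ≤ d`,
while `tr (P± S) = ± d (d ± 1)/2`. Testing the positivity of `S + λ C_Λ` against `P₋` gives
`λ ≥ (d-1)/2`, and testing `S = λ₊ C₊ - λ₋ C₋` against `P₊` and `P₋` gives `λ₊ ≥ (d+1)/2` and
`λ₋ ≥ (d-1)/2`.
-/

namespace Matrix

variable {n : Type*} [Fintype n] [DecidableEq n]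

open scoped MatrixOrder in
theorem PosSemidef.trace_mul_nonneg {𝕜 : Type*} [RCLike 𝕜] {A B : Matrix n n 𝕜}
    (hA : A.PosSemidef) (hB : B.PosSemidef) : 0 ≤ (A * B).trace := by
  obtain ⟨C, rfl⟩ := CStarAlgebra.nonneg_iff_eq_star_mul_self.mp hB.nonneg
  rw [star_eq_conjTranspose, ← Matrix.mul_assoc, trace_mul_comm, ← Matrix.mul_assoc]
  exact (hA.mul_mul_conjTranspose_same C).trace_nonneg

lemma PosSemidef.re_trace_mul_nonneg {A B : Matrix n n ℂ} (hA : A.PosSemidef)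
    (hB : B.PosSemidef) : 0 ≤ (A * B).trace.re :=
  (Complex.nonneg_iff.mp (hA.trace_mul_nonneg hB)).1

lemma PosSemidef.re_trace_mul_le {P C : Matrix n n ℂ} (hP : (1 - P).PosSemidef)
    (hC : C.PosSemidef) : (P * C).trace.re ≤ C.trace.re := by
  have := hP.re_trace_mul_nonneg hC
  rw [sub_mul, Matrix.one_mul, trace_sub, Complex.sub_re] at this
  linarith

end Matrix

section PartialTrace

variable {a b : Type*} [Fintype b]

lemma ptraceB_add (M N : Matrix (a × b) (a × b) ℂ) :
    ptraceB (M + N) = ptraceB M + ptraceB N := by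
  ext i j; simp [ptraceB, Finset.sum_add_distrib]

lemma ptraceB_sub (M N : Matrix (a × b) (a × b) ℂ) :
    ptraceB (M - N) = ptraceB M - ptraceB N := by
  ext i j; simp [ptraceB, Finset.sum_sub_distrib]

lemma ptraceB_smul (c : ℂ) (M : Matrix (a × b) (a × b) ℂ) :
    ptraceB (c • M) = c • ptraceB M := by
  ext i j; simp [ptraceB, Finset.mul_sum]

lemma trace_ptraceB [Fintype a] (M : Matrix (a × b) (a × b) ℂ) :
    (ptraceB M).trace = M.trace := by
  simp [Matrix.trace, ptraceB, Fintype.sum_prod_type]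

lemma ptraceB_one [DecidableEq a] [DecidableEq b] :
    ptraceB (1 : Matrix (a × b) (a × b) ℂ) = (Fintype.card b : ℂ) • 1 := by
  ext i j
  simp [ptraceB, Matrix.one_apply]

end PartialTrace

section Swap

variable (α : Type*) [DecidableEq α]

def swapMatrix : Matrix (α × α) (α × α) ℂ := Equiv.Perm.permMatrix ℂ (Equiv.prodComm α α)

@[simp] lemma swapMatrix_apply (p q : α × α) :
    swapMatrix α p q = if p.swap = q then 1 else 0 := by
  simp [swapMatrix, Equiv.toPEquiv_apply]

lemma isHermitian_swapMatrix : (swapMatrix α).IsHermitian := by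
  rw [Matrix.IsHermitian, swapMatrix, Matrix.conjTranspose_permMatrix]
  rfl

noncomputable def symmetricProj : Matrix (α × α) (α × α) ℂ := (2⁻¹ : ℂ) • (1 + swapMatrix α)

noncomputable def antisymmetricProj : Matrix (α × α) (α × α) ℂ := 1 - symmetricProj α

lemma one_sub_antisymmetricProj : 1 - antisymmetricProj α = symmetricProj α :=
  sub_sub_cancel _ _

lemma symmetricProj_sub_antisymmetricProj :
    symmetricProj α - antisymmetricProj α = swapMatrix α := by
  rw [antisymmetricProj, symmetricProj]
  module

variable [Fintype α]

lemma swapMatrix_mul_self : swapMatrix α * swapMatrix α = 1 := by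
  rw [swapMatrix, ← Matrix.permMatrix_mul]
  convert Matrix.permMatrix_one
  ext <;> simp

lemma trace_swapMatrix : (swapMatrix α).trace = Fintype.card α := by
  simp only [Matrix.trace, Matrix.diag, swapMatrix_apply, Fintype.sum_prod_type,
    Prod.swap_prod_mk, Prod.mk.injEq, and_iff_left_of_imp Eq.symm]
  simp

lemma ptraceB_swapMatrix : ptraceB (swapMatrix α) = 1 := by
  ext i j
  rcases eq_or_ne i j with rfl | h
  · simp [ptraceB, Prod.ext_iff, and_iff_left_of_imp Eq.symm, Finset.filter_eq']
  · simp [ptraceB, Prod.ext_iff, h]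

lemma isStarProjection_symmetricProj : IsStarProjection (symmetricProj α) := by
  refine ⟨?_, ?_⟩
  · rw [IsIdempotentElem, symmetricProj, smul_mul_smul_comm, add_mul, mul_add, mul_add,
      swapMatrix_mul_self]
    simp only [Matrix.one_mul, Matrix.mul_one]
    module
  · simp [IsSelfAdjoint, symmetricProj, Matrix.star_eq_conjTranspose,
      (isHermitian_swapMatrix α).eq]

open scoped MatrixOrder in
lemma posSemidef_symmetricProj : (symmetricProj α).PosSemidef :=
  Matrix.nonneg_iff_posSemidef.mp (isStarProjection_symmetricProj α).nonneg

open scoped MatrixOrder in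
lemma posSemidef_antisymmetricProj : (antisymmetricProj α).PosSemidef :=
  Matrix.nonneg_iff_posSemidef.mp (isStarProjection_symmetricProj α).one_sub.nonneg

lemma trace_symmetricProj_mul_swapMatrix : (symmetricProj α * swapMatrix α).trace =
    (((Fintype.card α : ℝ) * (Fintype.card α + 1) / 2 : ℝ) : ℂ) := by
  rw [symmetricProj, smul_mul_assoc, add_mul, swapMatrix_mul_self, Matrix.one_mul, trace_smul,
    trace_add, trace_one, trace_swapMatrix, Fintype.card_prod]
  push_cast
  ring

lemma trace_antisymmetricProj_mul_swapMatrix : (antisymmetricProj α * swapMatrix α).trace =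
    ((-((Fintype.card α : ℝ) * (Fintype.card α - 1) / 2) : ℝ) : ℂ) := by
  rw [antisymmetricProj, sub_mul, trace_sub, trace_symmetricProj_mul_swapMatrix, Matrix.one_mul,
    trace_swapMatrix]
  push_cast
  ring

lemma ptraceB_symmetricProj :
    ptraceB (symmetricProj α) = ((((Fintype.card α : ℝ) + 1) / 2 : ℝ) : ℂ) • 1 := by
  rw [symmetricProj, ptraceB_smul, ptraceB_add, ptraceB_one, ptraceB_swapMatrix]
  push_cast
  module

lemma ptraceB_antisymmetricProj :
    ptraceB (antisymmetricProj α) = ((((Fintype.card α : ℝ) - 1) / 2 : ℝ) : ℂ) • 1 := by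
  rw [antisymmetricProj, ptraceB_sub, ptraceB_one, ptraceB_symmetricProj]
  push_cast
  module

end Swap

section Choi

variable {da db : ℕ}

@[simp] lemma choi_add (Φ Ψ : Matrix (Fin da) (Fin da) ℂ →ₗ[ℂ] Matrix (Fin db) (Fin db) ℂ) :
    choi (Φ + Ψ) = choi Φ + choi Ψ := by
  ext p q; simp [choi]

@[simp] lemma choi_sub (Φ Ψ : Matrix (Fin da) (Fin da) ℂ →ₗ[ℂ] Matrix (Fin db) (Fin db) ℂ) :
    choi (Φ - Ψ) = choi Φ - choi Ψ := by
  ext p q; simp [choi]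

@[simp] lemma choi_smul (c : ℂ)
    (Φ : Matrix (Fin da) (Fin da) ℂ →ₗ[ℂ] Matrix (Fin db) (Fin db) ℂ) :
    choi (c • Φ) = c • choi Φ := by
  ext p q; simp [choi]

lemma choi_injective : Function.Injective
    (choi : (Matrix (Fin da) (Fin da) ℂ →ₗ[ℂ] Matrix (Fin db) (Fin db) ℂ) → _) := by
  intro Φ Ψ h
  refine Matrix.ext_linearMap ℂ fun i j => LinearMap.ext_ring ?_
  ext k l
  simpa [choi] using congrFun₂ h (i, k) (j, l)

noncomputable def ofChoi (C : Matrix (Fin da × Fin db) (Fin da × Fin db) ℂ) :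
    Matrix (Fin da) (Fin da) ℂ →ₗ[ℂ] Matrix (Fin db) (Fin db) ℂ where
  toFun X := Matrix.of fun k l => ∑ i, ∑ j, X i j * C (i, k) (j, l)
  map_add' X Y := by ext; simp [add_mul, Finset.sum_add_distrib]
  map_smul' c X := by ext; simp [mul_assoc, Finset.mul_sum]

@[simp] lemma choi_ofChoi (C : Matrix (Fin da × Fin db) (Fin da × Fin db) ℂ) :
    choi (ofChoi C) = C := by
  ext p q; simp [choi, ofChoi, Matrix.single_apply, ite_and, Finset.sum_ite_eq]

lemma choi_transposeMap (d : ℕ) : choi (transposeMap d) = swapMatrix (Fin d) := by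
  ext p q
  simp only [choi, transposeMap, Matrix.single_apply, Prod.ext_iff, swapMatrix_apply,
    Matrix.of_apply, LinearMap.coe_mk, AddHom.coe_mk, Matrix.transpose_apply, Prod.fst_swap,
    Prod.snd_swap]
  grind

lemma IsCPTNI.re_trace_choi_le
    {Λ : Matrix (Fin da) (Fin da) ℂ →ₗ[ℂ] Matrix (Fin db) (Fin db) ℂ} (hΛ : IsCPTNI Λ) :
    (choi Λ).trace.re ≤ da := by
  have := (Complex.nonneg_iff.mp hΛ.2.trace_nonneg).1
  rw [trace_sub, trace_one, trace_ptraceB, Complex.sub_re] at this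
  simpa using this

lemma IsCPTNI.re_trace_mul_choi_le
    {Λ : Matrix (Fin da) (Fin da) ℂ →ₗ[ℂ] Matrix (Fin db) (Fin db) ℂ} (hΛ : IsCPTNI Λ)
    {P : Matrix (Fin da × Fin db) (Fin da × Fin db) ℂ} (hP : (1 - P).PosSemidef) :
    (P * choi Λ).trace.re ≤ da :=
  (hP.re_trace_mul_le hΛ.1).trans hΛ.re_trace_choi_le

end Choi

/-- Also for `t = 0`, where `t⁻¹ = 0`: then `C = 0`, as for the antisymmetric projection
when `d = 1`. -/
lemma smul_inv_smul_of_ptraceB_eq {a b : Type*} [Fintype a] [Fintype b] [DecidableEq a]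
    {C : Matrix (a × b) (a × b) ℂ} {t : ℝ} (hC : C.PosSemidef) (ht : ptraceB C = (t : ℂ) • 1) : (t : ℂ) • ((t⁻¹ : ℝ) : ℂ) • C = C := by
  rcases eq_or_ne t 0 with rfl | ht0
  · have : C.trace = 0 := by rw [← trace_ptraceB, ht]; simp
    simp [hC.trace_eq_zero_iff.mp this]
  · rw [smul_smul, ← Complex.ofReal_mul, mul_inv_cancel₀ ht0, Complex.ofReal_one, one_smul]

lemma isCPTNI_of_choi_eq_inv_smul {da db : ℕ}
    {Φ : Matrix (Fin da) (Fin da) ℂ →ₗ[ℂ] Matrix (Fin db) (Fin db) ℂ}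
    {C : Matrix (Fin da × Fin db) (Fin da × Fin db) ℂ} {t : ℝ} (ht : 0 ≤ t)
    (hC : C.PosSemidef) (hpt : ptraceB C = (t : ℂ) • 1) (hΦ : choi Φ = ((t⁻¹ : ℝ) : ℂ) • C) :
    IsCPTNI Φ := by
  refine ⟨hΦ ▸ hC.smul (Complex.zero_le_real.mpr (inv_nonneg.mpr ht)), ?_⟩
  have : 1 - ptraceB (choi Φ) = ((1 - t⁻¹ * t : ℝ) : ℂ) • (1 : Matrix (Fin da) (Fin da) ℂ) := by
    rw [hΦ, ptraceB_smul, hpt, smul_smul]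
    push_cast
    module
  rw [Loewner, this]
  exact PosSemidef.one.smul (Complex.zero_le_real.mpr (sub_nonneg.mpr inv_mul_le_one))

/-- The Werner–Holevo channel `X ↦ (tr X • 1 + Xᵀ) / (d + 1)`. -/
noncomputable def wernerHolevoSym (d : ℕ) :
    Matrix (Fin d) (Fin d) ℂ →ₗ[ℂ] Matrix (Fin d) (Fin d) ℂ :=
  ofChoi ((((((d : ℝ) + 1) / 2)⁻¹ : ℝ) : ℂ) • symmetricProj (Fin d))

/-- The Werner–Holevo channel `X ↦ (tr X • 1 - Xᵀ) / (d - 1)`. -/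
noncomputable def wernerHolevoAntisym (d : ℕ) :
    Matrix (Fin d) (Fin d) ℂ →ₗ[ℂ] Matrix (Fin d) (Fin d) ℂ :=
  ofChoi ((((((d : ℝ) - 1) / 2)⁻¹ : ℝ) : ℂ) • antisymmetricProj (Fin d))

lemma isCPTNI_wernerHolevoSym (d : ℕ) : IsCPTNI (wernerHolevoSym d) :=
  isCPTNI_of_choi_eq_inv_smul (by positivity) (posSemidef_symmetricProj _)
    (by simpa using ptraceB_symmetricProj (Fin d)) (choi_ofChoi _)

lemma isCPTNI_wernerHolevoAntisym {d : ℕ} (hd : 0 < d) : IsCPTNI (wernerHolevoAntisym d) := by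
  have : (1 : ℝ) ≤ d := by exact_mod_cast hd
  exact isCPTNI_of_choi_eq_inv_smul (by linarith) (posSemidef_antisymmetricProj _)
    (by simpa using ptraceB_antisymmetricProj (Fin d)) (choi_ofChoi _)

lemma transposeMap_eq_sub_wernerHolevo (d : ℕ) :
    transposeMap d = ((((d : ℝ) + 1) / 2 : ℝ) : ℂ) • wernerHolevoSym d
      - ((((d : ℝ) - 1) / 2 : ℝ) : ℂ) • wernerHolevoAntisym d := by
  apply choi_injective
  rw [choi_sub, choi_smul, choi_smul, wernerHolevoSym, wernerHolevoAntisym, choi_ofChoi,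
    choi_ofChoi,
    smul_inv_smul_of_ptraceB_eq (posSemidef_symmetricProj _)
      (by simpa using ptraceB_symmetricProj (Fin d)),
    smul_inv_smul_of_ptraceB_eq (posSemidef_antisymmetricProj _)
      (by simpa using ptraceB_antisymmetricProj (Fin d)),
    symmetricProj_sub_antisymmetricProj, choi_transposeMap]

lemma isCPTNI_mix_transposeMap_wernerHolevoAntisym (d : ℕ) :
    IsCPTNI (((1 / (1 + ((d : ℝ) - 1) / 2) : ℝ) : ℂ) •
      (transposeMap d + ((((d : ℝ) - 1) / 2 : ℝ) : ℂ) • wernerHolevoAntisym d)) := by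
  rw [transposeMap_eq_sub_wernerHolevo, sub_add_cancel, smul_smul, ← Complex.ofReal_mul,
    show 1 + ((d : ℝ) - 1) / 2 = ((d : ℝ) + 1) / 2 by ring, one_div_mul_cancel (by positivity),
    Complex.ofReal_one, one_smul]
  exact isCPTNI_wernerHolevoSym d

lemma sub_one_div_two_le_of_isCPTNI_mix {d : ℕ} {x : ℝ} (hx : 0 ≤ x)
    {Λ : Matrix (Fin d) (Fin d) ℂ →ₗ[ℂ] Matrix (Fin d) (Fin d) ℂ} (hΛ : IsCPTNI Λ)
    (hmix : IsCPTNI (((1 / (1 + x) : ℝ) : ℂ) • (transposeMap d + (x : ℂ) • Λ))) :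
    ((d : ℝ) - 1) / 2 ≤ x := by
  have hpsd : (swapMatrix (Fin d) + (x : ℂ) • choi Λ).PosSemidef := by
    have := hmix.1.smul (Complex.zero_le_real.mpr (by linarith : 0 ≤ 1 + x))
    rwa [choi_smul, choi_add, choi_smul, choi_transposeMap, smul_smul, ← Complex.ofReal_mul,
      mul_one_div_cancel (by linarith), Complex.ofReal_one, one_smul] at this
  have hpair := (posSemidef_antisymmetricProj (Fin d)).re_trace_mul_nonneg hpsd
  rw [mul_add, trace_add, Matrix.mul_smul, trace_smul, trace_antisymmetricProj_mul_swapMatrix,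
    Complex.add_re, smul_eq_mul, Complex.re_ofReal_mul, Complex.ofReal_re,
    Fintype.card_fin] at hpair
  have hle := hΛ.re_trace_mul_choi_le
    (by rw [one_sub_antisymmetricProj]; exact posSemidef_symmetricProj _)
  nlinarith [mul_le_mul_of_nonneg_left hle hx]

lemma le_add_of_transposeMap_eq_sub {d : ℕ} {lp lm : ℝ} (hlp : 0 ≤ lp) (hlm : 0 ≤ lm)
    {Λp Λm : Matrix (Fin d) (Fin d) ℂ →ₗ[ℂ] Matrix (Fin d) (Fin d) ℂ} (hp : IsCPTNI Λp)
    (hm : IsCPTNI Λm) (h : transposeMap d = (lp : ℂ) • Λp - (lm : ℂ) • Λm) :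
    (d : ℝ) ≤ lp + lm := by
  have hS : swapMatrix (Fin d) = (lp : ℂ) • choi Λp - (lm : ℂ) • choi Λm := by
    rw [← choi_transposeMap, h, choi_sub, choi_smul, choi_smul]
  have pairing : ∀ P, (P * swapMatrix (Fin d)).trace.re =
      lp * (P * choi Λp).trace.re - lm * (P * choi Λm).trace.re := fun P => by
    rw [hS, mul_sub, Matrix.mul_smul, Matrix.mul_smul, trace_sub, trace_smul, trace_smul,
      smul_eq_mul, smul_eq_mul, Complex.sub_re, Complex.re_ofReal_mul, Complex.re_ofReal_mul]
  have hsym := pairing (symmetricProj (Fin d))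
  have hanti := pairing (antisymmetricProj (Fin d))
  rw [trace_symmetricProj_mul_swapMatrix, Complex.ofReal_re, Fintype.card_fin] at hsym
  rw [trace_antisymmetricProj_mul_swapMatrix, Complex.ofReal_re, Fintype.card_fin] at hanti
  have hp_sym := hp.re_trace_mul_choi_le (posSemidef_antisymmetricProj (Fin d))
  have hm_anti := hm.re_trace_mul_choi_le
    (by rw [one_sub_antisymmetricProj]; exact posSemidef_symmetricProj _)
  have hm_sym := (posSemidef_symmetricProj _).re_trace_mul_nonneg hm.1
  have hp_anti := (posSemidef_antisymmetricProj _).re_trace_mul_nonneg hp.1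
  nlinarith [mul_le_mul_of_nonneg_left hp_sym hlp, mul_le_mul_of_nonneg_left hm_anti hlm,
    mul_nonneg hlm hm_sym, mul_nonneg hlp hp_anti]

/-- for the transposition map `T` on dimension `d`,
`R(T) = (d-1)/2` and `‖T‖_CPTNI = d`. -/
theorem transposeMap_robustness_and_norm (d : ℕ) (hd : 0 < d) :
    robustnessCPTNI (transposeMap d) = ((d : ℝ) - 1) / 2 ∧
    cptniNorm (transposeMap d) = (d : ℝ) := by
  have hd1 : (1 : ℝ) ≤ d := by exact_mod_cast hd
  constructor
  · refine IsLeast.csInf_eq ⟨⟨by linarith, wernerHolevoAntisym d,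
      isCPTNI_wernerHolevoAntisym hd, isCPTNI_mix_transposeMap_wernerHolevoAntisym d⟩, ?_⟩
    rintro x ⟨hx, Λ, hΛ, hmix⟩
    exact sub_one_div_two_le_of_isCPTNI_mix hx hΛ hmix
  · refine IsLeast.csInf_eq ⟨⟨_, _, _, _, by positivity, by linarith,
      isCPTNI_wernerHolevoSym d, isCPTNI_wernerHolevoAntisym hd,
      transposeMap_eq_sub_wernerHolevo d, by ring⟩, ?_⟩
    rintro s ⟨lp, lm, Λp, Λm, hlp, hlm, hp, hm, h, rfl⟩
    exact le_add_of_transposeMap_eq_sub hlp hlm hp hm h
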